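/- The fractal CQCA T̂_c := (∏_{i=1}^{N} H_i) · (∏_{i=1}^{N} CZ_{i,i+1}) · (∏_{i=1}^{N} (√X)_i) on a ring of N ≥ 3 qubits, where √X := H·S·H with S := diag(1,i), implements the local transition rule of Eq. (3): for every site i, T̂_c X_i T̂_c† = X_{i-1} Z_i X_{i+1} and T̂_c Z_i T̂_c† = X_{i-1} Y_i X_{i+1} (indices mod N). -/

import Mathlib

/-!
`T̂_c` is unitary, so it suffices to push `P_i` through it, `T̂_c P_i = Q T̂_c`, one layer at a
time. The two single-qubit layers act site-wise by conjugation (`√X`: `X ↦ X`, `Z ↦ -Y`;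
`H`: `X ↔ Z`, `-Y ↦ Y`). The CZ ring is diagonal, and an operator with zero diagonal on site `i`
flips bit `i`; this multiplies the phase of the ring by the signs of its two neighbours, i.e.
produces `Z_{i-1} Z_{i+1}`.
-/

open Matrix Complex
open scoped Kronecker Classical

noncomputable section

namespace QCA

/-- Computational-basis index set of an `N`-qubit register. -/
abbrev QIdx (N : ℕ) := Fin N → Fin 2

/-- Operators (matrices) on an `N`-qubit register `(ℂ²)^{⊗N}`. -/
abbrev MatQ (N : ℕ) := Matrix (QIdx N) (QIdx N) ℂ

/-- Pauli X. -/
def Xg : Matrix (Fin 2) (Fin 2) ℂ := !![0, 1; 1, 0]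

/-- Pauli Z. -/
def Zg : Matrix (Fin 2) (Fin 2) ℂ := !![1, 0; 0, -1]

/-- Pauli Y = i·X·Z. -/
def Yg : Matrix (Fin 2) (Fin 2) ℂ := Complex.I • (Xg * Zg)

/-- Hadamard gate. -/
def Hg : Matrix (Fin 2) (Fin 2) ℂ := (Real.sqrt 2 : ℂ)⁻¹ • !![1, 1; 1, -1]

/-- Phase gate S = diag(1, i). -/
def Sg : Matrix (Fin 2) (Fin 2) ℂ := !![1, 0; 0, Complex.I]

/-- √X := H·S·H. -/
def sqrtXg : Matrix (Fin 2) (Fin 2) ℂ := Hg * Sg * Hg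

/-- The ket |+⟩ = (|0⟩+|1⟩)/√2. -/
def ketPlus : Fin 2 → ℂ := fun _ => (Real.sqrt 2 : ℂ)⁻¹

/-- The bra ⟨+|. -/
def braPlus : Fin 2 → ℂ := fun a => star (ketPlus a)

/-- The product state |+⟩^{⊗ι}. -/
def ketPlusAll (ι : Type*) [Fintype ι] : (ι → Fin 2) → ℂ := fun s => ∏ i, ketPlus (s i)

/-- Kronecker product of two vectors. -/
def kronVec {a b : Type*} (v : a → ℂ) (w : b → ℂ) : a × b → ℂ := fun p => v p.1 * w p.2

variable {ι : Type*} [Fintype ι] [DecidableEq ι]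

/-- `op1 P i` acts as the one-qubit operator `P` on qubit `i` and as the identity elsewhere. -/
def op1 (P : Matrix (Fin 2) (Fin 2) ℂ) (i : ι) : Matrix (ι → Fin 2) (ι → Fin 2) ℂ :=
  fun s t => P (s i) (t i) * ∏ j ∈ Finset.univ.erase i, (if s j = t j then (1 : ℂ) else 0)

/-- Controlled-Z gate between qubits `i` and `j` (identity elsewhere). -/
def cz2 (i j : ι) : Matrix (ι → Fin 2) (ι → Fin 2) ℂ :=
  Matrix.diagonal fun s => if s i = 1 ∧ s j = 1 then (-1 : ℂ) else 1

/-- The Z-rotation exp(iθ Z_i) on qubit `i`. -/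
def rotZ (θ : ℝ) (i : ι) : Matrix (ι → Fin 2) (ι → Fin 2) ℂ :=
  NormedSpace.exp (((θ : ℂ) * Complex.I) • op1 Zg i)

/-- The layer ∏_{i=1}^{N} H_i of Hadamards on every site of a ring of `N` qubits. -/
def hadamardLayer (N : ℕ) : MatQ N := (List.ofFn fun i : Fin N => op1 Hg i).prod

/-- The layer ∏_{i=1}^{N} CZ_{i,i+1} of controlled-Z gates on a ring of `N` qubits
(site indices mod `N`; the factors pairwise commute). -/
def czRing (N : ℕ) [NeZero N] : MatQ N := (List.ofFn fun i : Fin N => cz2 i (i + 1)).prod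

/-- The layer ∏_{i=1}^{N} (√X)_i on a ring of `N` qubits. -/
def sqrtXLayer (N : ℕ) : MatQ N := (List.ofFn fun i : Fin N => op1 sqrtXg i).prod

/-- The cluster CQCA T_c = (∏ H_i)·(∏ CZ_{i,i+1}) on a ring of `N` qubits. -/
def Tc (N : ℕ) [NeZero N] : MatQ N := hadamardLayer N * czRing N

/-- The periodic CQCA T̃_c = ∏ CZ_{i,i+1} on a ring of `N` qubits. -/
def Ttc (N : ℕ) [NeZero N] : MatQ N := czRing N

/-- The fractal CQCA T̂_c = (∏ H_i)·(∏ CZ_{i,i+1})·(∏ (√X)_i) on a ring of `N` qubits. -/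
def Thc (N : ℕ) [NeZero N] : MatQ N := hadamardLayer N * czRing N * sqrtXLayer N

/-- Controlled-Z between input qubit `i` and output qubit `i` on a doubled register. -/
def czIO {N : ℕ} (i : Fin N) : Matrix (QIdx N × QIdx N) (QIdx N × QIdx N) ℂ :=
  Matrix.diagonal fun p => if p.1 i = 1 ∧ p.2 i = 1 then (-1 : ℂ) else 1

/-- The unitary U_T = (1 ⊗ T)·(∏_i H_i^{(out)})·(∏_i CZ_{i,i}^{(in,out)}) of Eq. (16). -/
def UT {N : ℕ} (T : MatQ N) : Matrix (QIdx N × QIdx N) (QIdx N × QIdx N) ℂ :=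
  ((1 : MatQ N) ⊗ₖ T) *
    (List.ofFn fun i : Fin N => (1 : MatQ N) ⊗ₖ op1 Hg i).prod *
    (List.ofFn fun i : Fin N => czIO i).prod

/-- Contraction of the input register with the product bra `⊗_i bra i`. -/
def contractIn {N : ℕ} (bra : Fin N → Fin 2 → ℂ) (v : QIdx N × QIdx N → ℂ) : QIdx N → ℂ :=
  fun t => ∑ s : QIdx N, (∏ i, bra i (s i)) * v (s, t)

lemma diagonal_commute {α : Type*} [Fintype α] [DecidableEq α] (d e : α → ℂ) :
    Commute (Matrix.diagonal d) (Matrix.diagonal e) := by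
  unfold Commute SemiconjBy
  have h : (fun i => d i * e i) = fun i => e i * d i := by funext x; ring
  rw [Matrix.diagonal_mul_diagonal, Matrix.diagonal_mul_diagonal, h]

lemma Zg_eq_diagonal : Zg = Matrix.diagonal ![1, -1] := by
  ext i j
  fin_cases i <;> fin_cases j <;> simp [Zg, Matrix.diagonal]

lemma op1_diagonal (d : Fin 2 → ℂ) (i : ι) :
    op1 (Matrix.diagonal d) i = Matrix.diagonal (fun s => d (s i)) := by
  ext s t
  by_cases h : s = t
  · subst h
    simp [op1, Matrix.diagonal_apply_eq]
  · rw [Matrix.diagonal_apply_ne _ h]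
    by_cases hi : s i = t i
    · obtain ⟨k, hk⟩ : ∃ k, s k ≠ t k := Function.ne_iff.mp h
      have hki : k ≠ i := by rintro rfl; exact hk hi
      have h0 : (if s k = t k then (1 : ℂ) else 0) = 0 := by simp [hk]
      unfold op1
      rw [Finset.prod_eq_zero (Finset.mem_erase.mpr ⟨hki, Finset.mem_univ k⟩) h0]
      ring
    · unfold op1
      rw [Matrix.diagonal_apply_ne _ hi]
      ring

/-- The controlled-Z gate attached to an (undirected) edge `e`. -/
def czEdge {N : ℕ} (e : Sym2 (Fin N)) : MatQ N :=
  Matrix.diagonal fun s => if ∀ i ∈ e, s i = 1 then (-1 : ℂ) else 1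

/-- The unitary ∏_{{i,j} ∈ E(G)} CZ_{i,j} preparing the graph state (the
factors pairwise commute, so the product over the edge set is well defined). -/
def graphUnitary {N : ℕ} (G : SimpleGraph (Fin N)) [DecidableRel G.Adj] : MatQ N :=
  G.edgeFinset.noncommProd czEdge (by intro a _ b _ _; exact diagonal_commute _ _)

/-- The graph state |G⟩ = (∏_{{i,j} ∈ E(G)} CZ_{i,j}) |+⟩^{⊗N}. -/
def graphState {N : ℕ} (G : SimpleGraph (Fin N)) [DecidableRel G.Adj] : QIdx N → ℂ :=
  (graphUnitary G).mulVec (ketPlusAll (Fin N))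

/-- The stabilizer generator K_v = X_v · ∏_{w ∈ N_G(v)} Z_w of the graph state
(the Z factors pairwise commute, so the product is well defined). -/
def stabGen {N : ℕ} (G : SimpleGraph (Fin N)) [DecidableRel G.Adj] (v : Fin N) : MatQ N :=
  op1 Xg v *
    (G.neighborFinset v).noncommProd (fun w => op1 Zg w)
      (by
        intro a _ b _ _
        simp only [Function.onFun]
        rw [Zg_eq_diagonal, op1_diagonal, op1_diagonal]
        exact diagonal_commute _ _)

section PiKron

variable {R n : Type*} [CommSemiring R] [Fintype n] [DecidableEq n]

def piKron : (ι → Matrix n n R) →* Matrix (ι → n) (ι → n) R where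
  toFun f := Matrix.of fun s t => ∏ j, f j (s j) (t j)
  map_one' := by
    ext s t
    by_cases h : s = t
    · subst h; simp [one_apply]
    · obtain ⟨j, hj⟩ := Function.ne_iff.mp h
      rw [of_apply, one_apply_ne h]
      exact Finset.prod_eq_zero (Finset.mem_univ j) (by simp [one_apply_ne hj])
  map_mul' f g := by
    ext s t
    simp only [of_apply, mul_apply, Pi.mul_apply]
    rw [Finset.prod_univ_sum, Fintype.piFinset_univ]
    exact Finset.sum_congr rfl fun u _ => Finset.prod_mul_distrib

lemma piKron_apply (f : ι → Matrix n n R) (s t : ι → n) :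
    piKron f s t = ∏ j, f j (s j) (t j) := rfl

lemma piKron_star [StarRing R] (f : ι → Matrix n n R) : piKron (star f) = star (piKron f) := by
  ext s t
  simp [piKron_apply, star_prod]

lemma piKron_mem_unitary [StarRing R] {f : ι → Matrix n n R} (hf : ∀ j, f j ∈ unitary _) :
    piKron f ∈ unitary _ := by
  have hf' : f ∈ unitary _ := Unitary.mem_iff.mpr
    ⟨funext fun j => Unitary.star_mul_self_of_mem (hf j),
      funext fun j => Unitary.mul_star_self_of_mem (hf j)⟩
  rw [Unitary.mem_iff] at hf' ⊢
  simp only [← piKron_star, ← map_mul, hf', map_one, and_self]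

end PiKron

lemma diagonal_mem_unitary {α R : Type*} [Fintype α] [DecidableEq α] [CommSemiring R]
    [StarRing R] {d : α → R} (hd : d ∈ unitary (α → R)) :
    diagonal d ∈ unitary (Matrix α α R) := by
  rw [Unitary.mem_iff] at hd ⊢
  simp only [star_eq_conjTranspose, diagonal_conjTranspose, diagonal_mul_diagonal]
  exact ⟨congrArg diagonal hd.1, congrArg diagonal hd.2⟩

lemma mul_mul_star_of_semiconjBy {M : Type*} [Monoid M] [StarMul M] {U x y : M}
    (hU : U ∈ unitary M) (h : SemiconjBy U x y) : U * x * star U = y := by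
  rw [h.eq, mul_assoc, Unitary.mul_star_self_of_mem hU, mul_one]

lemma op1_eq_piKron (P : Matrix (Fin 2) (Fin 2) ℂ) (i : ι) :
    op1 P i = piKron (Pi.mulSingle i P) := by
  ext s t
  rw [piKron_apply, ← Finset.mul_prod_erase _ _ (Finset.mem_univ i), Pi.mulSingle_eq_same]
  refine congrArg _ (Finset.prod_congr rfl fun j hj => ?_)
  rw [Pi.mulSingle_eq_of_ne (Finset.ne_of_mem_erase hj), one_apply]

lemma op1_commute {i j : ι} (h : i ≠ j) (A B : Matrix (Fin 2) (Fin 2) ℂ) :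
    Commute (op1 A i) (op1 B j) := by
  rw [op1_eq_piKron, op1_eq_piKron]
  exact (Pi.mulSingle_commute h A B).map piKron

lemma semiconjBy_piKron_const_op1 {g A B : Matrix (Fin 2) (Fin 2) ℂ} (h : SemiconjBy g A B)
    (i : ι) : SemiconjBy (piKron fun _ => g) (op1 A i) (op1 B i) := by
  rw [op1_eq_piKron, op1_eq_piKron]
  refine SemiconjBy.map (funext fun j => ?_) piKron
  by_cases hj : j = i
  · subst hj; simpa only [Pi.mul_apply, Pi.mulSingle_eq_same] using h.eq
  · simp [hj]

lemma ofFn_op1_prod (g : Matrix (Fin 2) (Fin 2) ℂ) (N : ℕ) :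
    (List.ofFn fun i : Fin N => op1 g i).prod = piKron fun _ => g := by
  simp only [op1_eq_piKron]
  rw [← Function.comp_def piKron, ← List.map_ofFn, ← map_list_prod]
  congr 1
  funext j
  rw [Pi.list_prod_apply, List.ofFn_eq_map, List.map_map,
    List.prod_map_eq_pow_single j _ fun i hi _ => by simp [Pi.mulSingle_eq_of_ne' hi],
    List.count_finRange, Function.comp_apply, Pi.mulSingle_eq_same, pow_one]

def flipBit {κ : Type*} [DecidableEq κ] (i : κ) (s : κ → Fin 2) : κ → Fin 2 :=
  Function.update s i (s i + 1)

lemma flipBit_flipBit {κ : Type*} [DecidableEq κ] (i : κ) (s : κ → Fin 2) :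
    flipBit i (flipBit i s) = s := by
  have h : ∀ a : Fin 2, a + 1 + 1 = a := by decide
  simp [flipBit, h]

lemma op1_apply_eq_zero {A : Matrix (Fin 2) (Fin 2) ℂ} (hA : ∀ a, A a a = 0) {i : ι}
    {s t : ι → Fin 2} (h : t ≠ flipBit i s) : op1 A i s t = 0 := by
  rw [flipBit, Ne, Function.eq_update_iff, not_and_or] at h
  rcases h with hi | hj
  · have h2 : ∀ a b : Fin 2, a ≠ b + 1 → b = a := by decide
    simp [op1, h2 _ _ hi, hA]
  · push Not at hj
    obtain ⟨j, hji, hj⟩ := hj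
    refine mul_eq_zero_of_right _
      (Finset.prod_eq_zero (Finset.mem_erase.mpr ⟨hji, Finset.mem_univ j⟩) ?_)
    simp [Ne.symm hj]

lemma diagonal_mul_op1 {A : Matrix (Fin 2) (Fin 2) ℂ} (hA : ∀ a, A a a = 0) (i : ι)
    (d : (ι → Fin 2) → ℂ) : diagonal d * op1 A i = op1 A i * diagonal (d ∘ flipBit i) := by
  ext s t
  rw [diagonal_mul, mul_diagonal]
  by_cases h : t = flipBit i s
  · rw [h, Function.comp_apply, flipBit_flipBit, mul_comm]
  · rw [op1_apply_eq_zero hA h, mul_zero, zero_mul]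

lemma op1_Zg (i : ι) : op1 Zg i = diagonal fun s => Zg (s i) (s i) := by
  rw [Zg_eq_diagonal, op1_diagonal]
  simp only [diagonal_apply_eq]

def czSign (a b : Fin 2) : ℂ := if a = 1 ∧ b = 1 then -1 else 1

lemma czSign_add_one_left (a b : Fin 2) : czSign (a + 1) b = Zg b b * czSign a b := by
  fin_cases a <;> fin_cases b <;> simp [czSign, Zg]

lemma czSign_add_one_right (a b : Fin 2) : czSign a (b + 1) = Zg a a * czSign a b := by
  fin_cases a <;> fin_cases b <;> simp [czSign, Zg]

section Ring

variable {N : ℕ} [NeZero N]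

def czPhase (N : ℕ) [NeZero N] : QIdx N → ℂ :=
  ∏ k : Fin N, fun s => czSign (s k) (s (k + 1))

lemma czRing_eq_diagonal : czRing N = diagonal (czPhase N) := by
  have h := map_list_prod (diagonalRingHom (QIdx N) ℂ)
    (List.ofFn fun k s => czSign (s k) (s (k + 1)))
  rw [List.prod_ofFn, List.map_ofFn] at h
  exact h.symm

lemma czRing_mem_unitary : czRing N ∈ unitary (MatQ N) := by
  rw [czRing_eq_diagonal]
  refine diagonal_mem_unitary (Submonoid.prod_mem _ fun k _ => ?_)
  rw [Unitary.mem_iff_star_mul_self]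
  funext s
  simp only [Pi.mul_apply, Pi.star_apply, Pi.one_apply, czSign]
  split_ifs <;> norm_num

/-- Flipping bit `i` changes the sign of exactly the two edges `{i-1, i}` and `{i, i+1}`. -/
lemma czPhase_flipBit (h1 : (1 : Fin N) ≠ 0) (i : Fin N) (s : QIdx N) :
    czPhase N (flipBit i s) =
      Zg (s (i - 1)) (s (i - 1)) * Zg (s (i + 1)) (s (i + 1)) * czPhase N s := by
  have hprev : i - 1 ≠ i := fun h => h1 (sub_eq_self.mp h)
  have hnext : i + 1 ≠ i := add_ne_left.mpr h1
  have hk : ∀ k : Fin N, czSign (flipBit i s k) (flipBit i s (k + 1)) =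
      (if k = i - 1 then Zg (s (i - 1)) (s (i - 1)) else 1) *
      ((if k = i then Zg (s (i + 1)) (s (i + 1)) else 1) * czSign (s k) (s (k + 1))) := by
    intro k
    by_cases hk1 : k = i - 1
    · rw [hk1, if_pos rfl, if_neg hprev, one_mul, sub_add_cancel, flipBit,
        Function.update_of_ne hprev, Function.update_self, czSign_add_one_right]
    by_cases hk2 : k = i
    · rw [hk2, if_neg hprev.symm, if_pos rfl, one_mul, flipBit, Function.update_self,
        Function.update_of_ne hnext, czSign_add_one_left]
    have hk3 : k + 1 ≠ i := fun h => hk1 (eq_sub_of_add_eq h)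
    rw [if_neg hk1, if_neg hk2, one_mul, one_mul, flipBit, Function.update_of_ne hk2,
      Function.update_of_ne hk3]
  simp only [czPhase, Finset.prod_apply, hk, Finset.prod_mul_distrib, Finset.prod_ite_eq',
    Finset.mem_univ, if_true]
  ring

lemma semiconjBy_czRing_op1 (hN : 2 ≤ N) {A : Matrix (Fin 2) (Fin 2) ℂ} (hA : ∀ a, A a a = 0)
    (i : Fin N) :
    SemiconjBy (czRing N) (op1 A i) (op1 Zg (i - 1) * op1 A i * op1 Zg (i + 1)) := by
  have h1 : (1 : Fin N) ≠ 0 := by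
    rw [Ne, Fin.ext_iff, Fin.val_one', Fin.val_zero, Nat.mod_eq_of_lt hN]
    exact one_ne_zero
  have hflip : diagonal (czPhase N ∘ flipBit i) =
      op1 Zg (i - 1) * op1 Zg (i + 1) * czRing N := by
    rw [op1_Zg, op1_Zg, czRing_eq_diagonal, diagonal_mul_diagonal, diagonal_mul_diagonal]
    exact congrArg diagonal (funext (czPhase_flipBit h1 i))
  have hcomm : Commute (op1 A i) (op1 Zg (i - 1)) :=
    op1_commute (fun h => h1 (sub_eq_self.mp h.symm)) A Zg
  calc czRing N * op1 A i = op1 A i * (op1 Zg (i - 1) * op1 Zg (i + 1) * czRing N) := by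
        rw [czRing_eq_diagonal, diagonal_mul_op1 hA, hflip, czRing_eq_diagonal]
    _ = _ := by rw [← mul_assoc, ← mul_assoc, hcomm.eq]

end Ring

lemma Hg_conjTranspose : Hgᴴ = Hg := by
  ext a b
  fin_cases a <;> fin_cases b <;> simp [Hg, conjTranspose_apply]

lemma Hg_mul_Hg : Hg * Hg = 1 := by
  have h2 : ((√2 : ℝ) : ℂ) ^ 2 = 2 := by norm_cast; simp
  ext a b
  fin_cases a <;> fin_cases b <;> simp [Hg, mul_apply, Fin.sum_univ_two] <;>
    field_simp <;> simp [h2] <;> norm_num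

lemma Hg_mem_unitary : Hg ∈ unitary (Matrix (Fin 2) (Fin 2) ℂ) := by
  rw [Unitary.mem_iff, star_eq_conjTranspose, Hg_conjTranspose, Hg_mul_Hg]
  exact ⟨rfl, rfl⟩

lemma Sg_mem_unitary : Sg ∈ unitary (Matrix (Fin 2) (Fin 2) ℂ) := by
  rw [Unitary.mem_iff, star_eq_conjTranspose]
  constructor <;> ext a b <;> fin_cases a <;> fin_cases b <;>
    simp [Sg, mul_apply, Fin.sum_univ_two, conjTranspose_apply]

lemma sqrtXg_mem_unitary : sqrtXg ∈ unitary (Matrix (Fin 2) (Fin 2) ℂ) :=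
  mul_mem (mul_mem Hg_mem_unitary Sg_mem_unitary) Hg_mem_unitary

lemma semiconjBy_Hg_Xg : SemiconjBy Hg Xg Zg := by
  ext a b
  fin_cases a <;> fin_cases b <;> simp [Hg, Xg, Zg, mul_apply, Fin.sum_univ_two]

lemma semiconjBy_Hg_Zg : SemiconjBy Hg Zg Xg := by
  ext a b
  fin_cases a <;> fin_cases b <;> simp [Hg, Xg, Zg, mul_apply, Fin.sum_univ_two]

lemma semiconjBy_Hg_Yg : SemiconjBy Hg Yg (-Yg) := by
  ext a b
  fin_cases a <;> fin_cases b <;>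
    simp [Hg, Yg, Xg, Zg, mul_apply, Fin.sum_univ_two] <;> ring

lemma semiconjBy_Sg_Xg : SemiconjBy Sg Xg Yg := by
  ext a b
  fin_cases a <;> fin_cases b <;> simp [Sg, Yg, Xg, Zg, mul_apply, Fin.sum_univ_two]

lemma semiconjBy_Sg_Zg : SemiconjBy Sg Zg Zg := by
  ext a b
  fin_cases a <;> fin_cases b <;> simp [Sg, Zg, mul_apply, Fin.sum_univ_two]

lemma semiconjBy_sqrtXg_Xg : SemiconjBy sqrtXg Xg Xg :=
  (semiconjBy_Hg_Zg.mul_left semiconjBy_Sg_Zg).mul_left semiconjBy_Hg_Xg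

lemma semiconjBy_sqrtXg_Zg : SemiconjBy sqrtXg Zg (-Yg) :=
  (semiconjBy_Hg_Yg.mul_left semiconjBy_Sg_Xg).mul_left semiconjBy_Hg_Zg

lemma Xg_apply_self (a : Fin 2) : Xg a a = 0 := by
  fin_cases a <;> simp [Xg]

lemma neg_Yg_apply_self (a : Fin 2) : (-Yg) a a = 0 := by
  fin_cases a <;> simp [Yg, Xg, Zg]

lemma semiconjBy_piKron_Hg_sandwich {N : ℕ} [NeZero N] {A B : Matrix (Fin 2) (Fin 2) ℂ}
    (h : SemiconjBy Hg A B) (i : Fin N) :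
    SemiconjBy (piKron fun _ => Hg) (op1 Zg (i - 1) * op1 A i * op1 Zg (i + 1))
      (op1 Xg (i - 1) * op1 B i * op1 Xg (i + 1)) :=
  ((semiconjBy_piKron_const_op1 semiconjBy_Hg_Zg _).mul_right
    (semiconjBy_piKron_const_op1 h i)).mul_right (semiconjBy_piKron_const_op1 semiconjBy_Hg_Zg _)

lemma Thc_eq (N : ℕ) [NeZero N] :
    Thc N = (piKron fun _ => Hg) * czRing N * piKron fun _ => sqrtXg := by
  rw [Thc, hadamardLayer, sqrtXLayer, ofFn_op1_prod, ofFn_op1_prod]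

lemma Thc_mem_unitary (N : ℕ) [NeZero N] : Thc N ∈ unitary (MatQ N) := by
  rw [Thc_eq]
  exact mul_mem (mul_mem (piKron_mem_unitary fun _ => Hg_mem_unitary) czRing_mem_unitary)
    (piKron_mem_unitary fun _ => sqrtXg_mem_unitary)

/-- the fractal CQCA `T̂_c = (∏H_i)(∏CZ_{i,i+1})(∏(√X)_i)` satisfies
`T̂_c X_i T̂_c† = X_{i-1} Z_i X_{i+1}` and `T̂_c Z_i T̂_c† = X_{i-1} Y_i X_{i+1}`. -/
theorem fractal_cqca_rule {N : ℕ} [NeZero N] (hN : 3 ≤ N) (i : Fin N) :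
    Thc N * op1 Xg i * (Thc N)ᴴ = op1 Xg (i - 1) * op1 Zg i * op1 Xg (i + 1) ∧
    Thc N * op1 Zg i * (Thc N)ᴴ = op1 Xg (i - 1) * op1 Yg i * op1 Xg (i + 1) := by
  have hN2 : 2 ≤ N := by omega
  have hHY : SemiconjBy Hg (-Yg) Yg := by simpa using semiconjBy_Hg_Yg.neg_right
  rw [← star_eq_conjTranspose]
  constructor <;> refine mul_mul_star_of_semiconjBy (Thc_mem_unitary N) ?_ <;> rw [Thc_eq]
  · exact ((semiconjBy_piKron_Hg_sandwich semiconjBy_Hg_Xg i).mul_left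
      (semiconjBy_czRing_op1 hN2 Xg_apply_self i)).mul_left
      (semiconjBy_piKron_const_op1 semiconjBy_sqrtXg_Xg i)
  · exact ((semiconjBy_piKron_Hg_sandwich hHY i).mul_left
      (semiconjBy_czRing_op1 hN2 neg_Yg_apply_self i)).mul_left
      (semiconjBy_piKron_const_op1 semiconjBy_sqrtXg_Zg i)

end QCA

end
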